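/- Let g ⊆ {0,1}^m × {0,1} be a partial Boolean function. Then the sabotage complexity RS(g) equals min over zero-error randomized algorithms 𝒯 for g (probability distributions over deterministic decision trees computing g) of the max over pairs of valid inputs x, y with g(x) ≠ g(y) of E_{T∼𝒯}[sep_T(x,y)]; and this quantity in turn equals max over probability distributions p on pairs (x,y) of valid inputs with g(x) = 0 and g(y) = 1 of min over deterministic decision trees T computing g of E_{(x,y)∼p}[sep_T(x,y)]. -/

import Mathlib

open Finset

inductive DTree (ι : Type) (S : Type) where
  | leaf : S → DTree ι S
  | node : ι → DTree ι S → DTree ι S → DTree ι S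

namespace DTree

/-- Evaluate a deterministic decision tree on an input. -/
def eval {ι S : Type} : DTree ι S → (ι → Bool) → S
  | leaf s, _ => s
  | node i t0 t1, x => if x i then t1.eval x else t0.eval x

/-- The depth (worst-case number of queries) of a decision tree. -/
def depth {ι S : Type} : DTree ι S → ℕ
  | leaf _ => 0
  | node _ t0 t1 => max t0.depth t1.depth + 1

/-- The number of queries a decision tree makes on a given input. -/
def queries {ι S : Type} : DTree ι S → (ι → Bool) → ℕ
  | leaf _, _ => 0
  | node i t0 t1, x => (if x i then t1.queries x else t0.queries x) + 1

end DTree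

/-- A probability distribution on a finite type, as a nonnegative real weight function summing to 1. -/
def IsDist {γ : Type} [Fintype γ] (μ : γ → ℝ) : Prop :=
  (∀ x, 0 ≤ μ x) ∧ ∑ x, μ x = 1

/-- The support of `μ` is contained in `A`. -/
def SuppIn {γ : Type} [Fintype γ] (μ : γ → ℝ) (A : Set γ) : Prop :=
  ∀ x, μ x ≠ 0 → x ∈ A

/-- `g⁻¹(b)` for a partial Boolean function given as a relation. -/
def preim {m : ℕ} (g : Set ((Fin m → Bool) × Bool)) (b : Bool) : Set (Fin m → Bool) :=
  {x | (x, b) ∈ g ∧ (x, !b) ∉ g}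

/-- `x` is a valid input of the partial Boolean function `g`. -/
def ValidIn {m : ℕ} (g : Set ((Fin m → Bool) × Bool)) (x : Fin m → Bool) : Prop :=
  x ∈ preim g false ∨ x ∈ preim g true

/-- A deterministic decision tree computes the partial Boolean function `g`. -/
def Computes {m : ℕ} (T : DTree (Fin m) Bool) (g : Set ((Fin m → Bool) × Bool)) : Prop :=
  ∀ b : Bool, ∀ x ∈ preim g b, T.eval x = b

/-- The paper's convention for partial Boolean functions: for every invalid input `y`, both
`(y,0)` and `(y,1)` belong to the relation (so that any output is accepted on invalid inputs).
`totalize g` adds all such pairs; it has the same valid inputs and the same `g⁻¹(b)` as `g`. -/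
def totalize {m : ℕ} (g : Set ((Fin m → Bool) × Bool)) : Set ((Fin m → Bool) × Bool) :=
  {p | p ∈ g ∨ ¬ ValidIn g p.1}

/-- The four-letter alphabet `{0, 1, *, †}` used for sabotaged inputs. -/
inductive Sab4 where
  | zero | one | star | dag
deriving DecidableEq

instance : Fintype Sab4 where
  elems := {Sab4.zero, Sab4.one, Sab4.star, Sab4.dag}
  complete := fun x => by cases x <;> simp

/-- Decision trees over the four-letter alphabet. -/
inductive QTree (ι : Type) (S : Type) where
  | leaf : S → QTree ι S
  | node : ι → (Sab4 → QTree ι S) → QTree ι S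

namespace QTree

def eval {ι S : Type} : QTree ι S → (ι → Sab4) → S
  | leaf s, _ => s
  | node i ch, w => (ch (w i)).eval w

def queries {ι S : Type} : QTree ι S → (ι → Sab4) → ℕ
  | leaf _, _ => 0
  | node i ch, w => (ch (w i)).queries w + 1

end QTree

/-- A Boolean string is consistent with the non-special coordinates of a sabotaged string. -/
def ConsistentWith {m : ℕ} (x : Fin m → Bool) (w : Fin m → Sab4) : Prop :=
  ∀ i, (w i = Sab4.zero → x i = false) ∧ (w i = Sab4.one → x i = true)

/-- `w` is a valid (sabotaged) input of `g_sab`: it contains exactly one kind of special symbol,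
and its special symbols can be filled in to produce a string in `g⁻¹(0)` and also one in `g⁻¹(1)`. -/
def SabValid {m : ℕ} (g : Set ((Fin m → Bool) × Bool)) (w : Fin m → Sab4) : Prop :=
  (((∃ i, w i = Sab4.star) ∧ ∀ i, w i ≠ Sab4.dag) ∨
    ((∃ i, w i = Sab4.dag) ∧ ∀ i, w i ≠ Sab4.star)) ∧
  (∃ x ∈ preim g false, ConsistentWith x w) ∧ (∃ y ∈ preim g true, ConsistentWith y w)

/-- A tree computes `g_sab`: on every sabotaged input it outputs the special symbol it contains
(`false` encoding `*` and `true` encoding `†`). -/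
def SabComputes {m : ℕ} (T : QTree (Fin m) Bool) (g : Set ((Fin m → Bool) × Bool)) : Prop :=
  ∀ w : Fin m → Sab4, SabValid g w →
    (((∃ i, w i = Sab4.star) → T.eval w = false) ∧ ((∃ i, w i = Sab4.dag) → T.eval w = true))

/-- Sabotage complexity `RS(g) = R_0(g_sab)`: the least `c` such that some (finitely supported)
zero-error randomized algorithm for `g_sab` makes at most `c` expected queries on every
sabotaged input. -/
noncomputable def RS {m : ℕ} (g : Set ((Fin m → Bool) × Bool)) : ℝ :=
  sInf { c : ℝ | ∃ (k : ℕ) (wt : Fin k → ℝ) (T : Fin k → QTree (Fin m) Bool),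
    IsDist wt ∧ (∀ i, SabComputes (T i) g) ∧
    ∀ w : Fin m → Sab4, SabValid g w → ∑ i, wt i * ((T i).queries w : ℝ) ≤ c }

/-- `sep T x y`: the depth (root has depth 1) of the node of `T` reached by both `x` and `y`
at which the queried coordinate of `x` and `y` differ (0 if a leaf is reached first). -/
def sep {m : ℕ} {S : Type} : DTree (Fin m) S → (Fin m → Bool) → (Fin m → Bool) → ℕ
  | .leaf _, _, _ => 0
  | .node j t0 t1, x, y =>
      if x j = y j then (if x j then sep t1 x y else sep t0 x y) + 1 else 1

/-!
A tree `T` computing `g` becomes a tree for `g_sab` by answering `*` or `†` at the first special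
symbol it reads; on a sabotaged input consistent with `x ∈ g⁻¹(0)` and `y ∈ g⁻¹(1)` this happens
no later than at depth `sep T x y`. Conversely, a tree for `g_sab` run on Boolean inputs computes
`g`, because at each of its leaves the answers read so far cannot fit both `g⁻¹(0)` and `g⁻¹(1)`;
and it separates `x` from `y` no later than it stops on the input with `*` wherever `x` and `y`
differ. So `RS(g)` is the zero-error randomized complexity of `g` with cost `sep`.

The second equality is the minimax theorem (Sion's) for the game in which one player picks a
tree computing `g` and the other a pair `(x, y)`. The game is finite: skipping repeated queries
along paths turns every tree into one of depth at most `m` with no larger separation depths.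
-/

def Agrees {ι : Type} (ρ : ι → Option Bool) (x : ι → Bool) : Prop :=
  ∀ i b, ρ i = some b → x i = b

section Agrees

variable {ι : Type} {ρ : ι → Option Bool} {x y : ι → Bool}

theorem agrees_none (x : ι → Bool) : Agrees (fun _ => none) x :=
  fun _ _ h => nomatch h

theorem Agrees.update [DecidableEq ι] (h : Agrees ρ x) {i : ι} {b : Bool} (hb : x i = b) :
    Agrees (Function.update ρ i (some b)) x := by
  intro j c hj
  by_cases hji : j = i
  · subst hji
    simp only [Function.update_self, Option.some.injEq] at hj
    exact hj ▸ hb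
  · exact h j c (by rwa [Function.update_of_ne hji] at hj)

theorem Agrees.of_update [DecidableEq ι] (hx : Agrees ρ x) {i : ι}
    (hy : Agrees (Function.update ρ i (some (x i))) y) : Agrees ρ y := by
  intro j c hj
  by_cases hji : j = i
  · subst hji
    rw [hy j (x j) (by simp), hx j c hj]
  · exact hy j c (by rwa [Function.update_of_ne hji])

end Agrees

namespace DTree

variable {ι S : Type}

theorem exists_eval_eq [DecidableEq ι] (l : List ι) (f : (ι → Bool) → S)
    (hf : ∀ x x', (∀ i ∈ l, x i = x' i) → f x = f x') : ∃ T : DTree ι S, ∀ x, T.eval x = f x := by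
  induction l generalizing f with
  | nil => exact ⟨leaf (f fun _ => false), fun x => hf _ _ (by simp)⟩
  | cons i l ih =>
    have hupd (b : Bool) : ∀ x x', (∀ j ∈ l, x j = x' j) →
        f (Function.update x i b) = f (Function.update x' i b) := by
      refine fun x x' h => hf _ _ fun j hj => ?_
      by_cases hji : j = i
      · subst hji; simp
      · simp only [Function.update_of_ne hji]
        exact h j ((List.mem_cons.mp hj).resolve_left hji)
    obtain ⟨T₀, hT₀⟩ := ih _ (hupd false)
    obtain ⟨T₁, hT₁⟩ := ih _ (hupd true)
    refine ⟨node i T₀ T₁, fun x => ?_⟩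
    cases hxi : x i <;> simp [eval, hT₀, hT₁, ← hxi]

theorem finite_setOf_depth_le [Finite ι] [Finite S] :
    ∀ d, {T : DTree ι S | T.depth ≤ d}.Finite
  | 0 => (Set.finite_range leaf).subset fun T hT => by
      cases T with
      | leaf s => exact ⟨s, rfl⟩
      | node => simp [depth] at hT
  | d + 1 =>
    ((Set.finite_range leaf).union
      ((Set.finite_univ.prod ((finite_setOf_depth_le d).prod (finite_setOf_depth_le d))).image
        fun p : ι × DTree ι S × DTree ι S => node p.1 p.2.1 p.2.2)).subset fun T hT => by
      cases T with
      | leaf s => exact Or.inl ⟨s, rfl⟩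
      | node i t₀ t₁ =>
        have hd : max t₀.depth t₁.depth ≤ d := Nat.le_of_succ_le_succ hT
        exact Or.inr ⟨(i, t₀, t₁), ⟨trivial, max_le_iff.mp hd⟩, rfl⟩

def prune [DecidableEq ι] : DTree ι S → (ι → Option Bool) → DTree ι S
  | leaf s, _ => leaf s
  | node i t₀ t₁, ρ => match ρ i with
    | some true => prune t₁ ρ
    | some false => prune t₀ ρ
    | none => node i (prune t₀ (Function.update ρ i (some false)))
        (prune t₁ (Function.update ρ i (some true)))

variable [DecidableEq ι]

theorem eval_prune {x : ι → Bool} (T : DTree ι S) {ρ : ι → Option Bool} (hρ : Agrees ρ x) :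
    (T.prune ρ).eval x = T.eval x := by
  induction T generalizing ρ with
  | leaf s => rfl
  | node i t₀ t₁ ih₀ ih₁ =>
    rcases hi : ρ i with _ | _ | _
    · cases hxi : x i
      · simp [prune, eval, hi, hxi, ih₀ (hρ.update hxi)]
      · simp [prune, eval, hi, hxi, ih₁ (hρ.update hxi)]
    · simp [prune, eval, hi, hρ i false hi, ih₀ hρ]
    · simp [prune, eval, hi, hρ i true hi, ih₁ hρ]

theorem depth_prune [Fintype ι] (T : DTree ι S) (ρ : ι → Option Bool) :
    (T.prune ρ).depth ≤ #{i | ρ i = none} := by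
  induction T generalizing ρ with
  | leaf s => exact Nat.zero_le _
  | node i t₀ t₁ ih₀ ih₁ =>
    rcases hi : ρ i with _ | _ | _
    · have hfree (b : Bool) :
          #{j | Function.update ρ i (some b) j = none} + 1 = #{j | ρ j = none} := by
        have : ({j | Function.update ρ i (some b) j = none} : Finset ι) =
            ({j | ρ j = none} : Finset ι).erase i := by
          ext j
          by_cases hji : j = i <;> simp [hji]
        rw [this, Finset.card_erase_add_one (by simp [hi])]
      have h₀ := ih₀ (Function.update ρ i (some false))
      have h₁ := ih₁ (Function.update ρ i (some true))
      have := hfree false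
      have := hfree true
      simp only [prune, hi, depth]
      omega
    · simpa [prune, hi] using ih₀ ρ
    · simpa [prune, hi] using ih₁ ρ

end DTree

section Sep

variable {m : ℕ} {S : Type}

theorem sep_comm (T : DTree (Fin m) S) (x y : Fin m → Bool) : sep T x y = sep T y x := by
  induction T with
  | leaf s => rfl
  | node j t₀ t₁ ih₀ ih₁ =>
    by_cases h : x j = y j
    · simp [sep, h, ih₀, ih₁]
    · simp [sep, h, Ne.symm h]

theorem sep_le_depth (T : DTree (Fin m) S) (x y : Fin m → Bool) : sep T x y ≤ T.depth := by
  induction T with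
  | leaf s => exact le_rfl
  | node j t₀ t₁ ih₀ ih₁ =>
    simp only [sep, DTree.depth]
    split_ifs <;> omega

theorem sep_prune_le (T : DTree (Fin m) S) {ρ : Fin m → Option Bool} {x y : Fin m → Bool}
    (hx : Agrees ρ x) (hy : Agrees ρ y) : sep (T.prune ρ) x y ≤ sep T x y := by
  induction T generalizing ρ with
  | leaf s => exact le_rfl
  | node i t₀ t₁ ih₀ ih₁ =>
    rcases hi : ρ i with _ | _ | _
    · by_cases h : x i = y i
      · cases hxi : x i
        · have hyi : y i = false := h ▸ hxi
          have := ih₀ (hx.update hxi) (hy.update hyi)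
          simp [DTree.prune, sep, hi, hxi, hyi, this]
        · have hyi : y i = true := h ▸ hxi
          have := ih₁ (hx.update hxi) (hy.update hyi)
          simp [DTree.prune, sep, hi, hxi, hyi, this]
      · simp [DTree.prune, sep, hi, h]
    · have := ih₀ hx hy
      simp [DTree.prune, hi, sep, hx i false hi, hy i false hi]
      omega
    · have := ih₁ hx hy
      simp [DTree.prune, hi, sep, hx i true hi, hy i true hi]
      omega

theorem exists_depth_le_sep_le (T : DTree (Fin m) S) :
    ∃ T' : DTree (Fin m) S, T'.depth ≤ m ∧ (∀ x, T'.eval x = T.eval x) ∧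
      ∀ x y, sep T' x y ≤ sep T x y :=
  ⟨T.prune fun _ => none, by simpa using T.depth_prune fun _ => none,
    fun x => T.eval_prune (agrees_none x),
    fun _ _ => sep_prune_le T (agrees_none _) (agrees_none _)⟩

end Sep

def Sab4.ofBool (b : Bool) : Sab4 := if b then .one else .zero

section Sabotage

variable {m : ℕ} {g : Set ((Fin m → Bool) × Bool)}

def mixWith (s : Sab4) (x y : Fin m → Bool) : Fin m → Sab4 :=
  fun i => if x i = y i then Sab4.ofBool (x i) else s

theorem mixWith_comm (s : Sab4) (x y : Fin m → Bool) : mixWith s x y = mixWith s y x := by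
  funext i
  by_cases h : x i = y i <;> simp [mixWith, h, Ne.symm]

theorem mixWith_of_eq {s : Sab4} {x y : Fin m → Bool} {i : Fin m} (h : x i = y i) :
    mixWith s x y i = Sab4.ofBool (x i) :=
  if_pos h

theorem mixWith_of_ne {s : Sab4} {x y : Fin m → Bool} {i : Fin m} (h : x i ≠ y i) :
    mixWith s x y i = s :=
  if_neg h

theorem consistentWith_mixWith {s : Sab4} (hs : s = .star ∨ s = .dag) (x y : Fin m → Bool) :
    ConsistentWith x (mixWith s x y) := by
  intro i
  by_cases h : x i = y i
  · rw [mixWith_of_eq h]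
    cases x i <;> simp [Sab4.ofBool]
  · rcases hs with rfl | rfl <;> simp [mixWith_of_ne h]

theorem exists_ne_of_mem_preim {x y : Fin m → Bool} (hx : x ∈ preim g false)
    (hy : y ∈ preim g true) : ∃ i, x i ≠ y i := by
  by_contra! h
  exact hx.2 (funext h ▸ hy).1

theorem sabValid_mixWith {s : Sab4} (hs : s = .star ∨ s = .dag) {x y : Fin m → Bool}
    (hx : x ∈ preim g false) (hy : y ∈ preim g true) : SabValid g (mixWith s x y) := by
  obtain ⟨i, hi⟩ := exists_ne_of_mem_preim hx hy
  have hletter (j : Fin m) : mixWith s x y j = s ∨ mixWith s x y j = .zero ∨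
      mixWith s x y j = .one := by
    by_cases h : x j = y j
    · rw [mixWith_of_eq h]
      cases x j <;> simp [Sab4.ofBool]
    · exact .inl (mixWith_of_ne h)
  refine ⟨?_, ⟨x, hx, consistentWith_mixWith hs x y⟩,
    ⟨y, hy, mixWith_comm s x y ▸ consistentWith_mixWith hs y x⟩⟩
  rcases hs with rfl | rfl
  · exact .inl ⟨⟨i, mixWith_of_ne hi⟩, fun j => by rcases hletter j with h | h | h <;> simp [h]⟩
  · exact .inr ⟨⟨i, mixWith_of_ne hi⟩, fun j => by rcases hletter j with h | h | h <;> simp [h]⟩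

namespace DTree

def toQTree {ι : Type} : DTree ι Bool → QTree ι Bool
  | leaf b => .leaf b
  | node i t₀ t₁ => .node i fun
    | .zero => t₀.toQTree
    | .one => t₁.toQTree
    | .star => .leaf false
    | .dag => .leaf true

theorem queries_toQTree_le (T : DTree (Fin m) Bool) {x y : Fin m → Bool} {w : Fin m → Sab4}
    (hx : ConsistentWith x w) (hy : ConsistentWith y w) : T.toQTree.queries w ≤ sep T x y := by
  induction T with
  | leaf b => exact Nat.zero_le _
  | node i t₀ t₁ ih₀ ih₁ =>
    rcases hwi : w i with _ | _ | _ | _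
    · simp [toQTree, QTree.queries, sep, hwi, (hx i).1 hwi, (hy i).1 hwi, ih₀]
    · simp [toQTree, QTree.queries, sep, hwi, (hx i).2 hwi, (hy i).2 hwi, ih₁]
    all_goals by_cases h : x i = y i <;> simp [toQTree, QTree.queries, sep, hwi, h]

theorem eval_toQTree (T : DTree (Fin m) Bool) {x y : Fin m → Bool} {w : Fin m → Sab4}
    (hx : ConsistentWith x w) (hy : ConsistentWith y w) (hne : T.eval x ≠ T.eval y) :
    ((∀ i, w i ≠ .dag) → T.toQTree.eval w = false) ∧
      ((∀ i, w i ≠ .star) → T.toQTree.eval w = true) := by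
  induction T with
  | leaf b => exact absurd rfl hne
  | node i t₀ t₁ ih₀ ih₁ =>
    rcases hwi : w i with _ | _ | _ | _
    · simpa [toQTree, QTree.eval, hwi] using
        ih₀ (by simpa [DTree.eval, (hx i).1 hwi, (hy i).1 hwi] using hne)
    · simpa [toQTree, QTree.eval, hwi] using
        ih₁ (by simpa [DTree.eval, (hx i).2 hwi, (hy i).2 hwi] using hne)
    · exact ⟨fun _ => by simp [toQTree, QTree.eval, hwi], fun h => absurd hwi (h i)⟩
    · exact ⟨fun h => absurd hwi (h i), fun _ => by simp [toQTree, QTree.eval, hwi]⟩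

theorem sabComputes_toQTree {T : DTree (Fin m) Bool} (hT : Computes T g) :
    SabComputes T.toQTree g := by
  rintro w ⟨hspecial, ⟨x, hx, hxw⟩, ⟨y, hy, hyw⟩⟩
  have key := T.eval_toQTree hxw hyw (by simp [hT false x hx, hT true y hy])
  refine ⟨fun ⟨i, hi⟩ => key.1 ?_, fun ⟨i, hi⟩ => key.2 ?_⟩
  · rcases hspecial with ⟨_, h⟩ | ⟨_, h⟩
    exacts [h, absurd hi (h i)]
  · rcases hspecial with ⟨_, h⟩ | ⟨_, h⟩
    exacts [absurd hi (h i), h]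

end DTree

namespace QTree

open Classical in
noncomputable def toDTree (g : Set ((Fin m → Bool) × Bool)) :
    QTree (Fin m) Bool → (Fin m → Option Bool) → DTree (Fin m) Bool
  | leaf _, ρ => .leaf (decide (∃ y ∈ preim g true, Agrees ρ y))
  | node i ch, ρ => .node i ((ch .zero).toDTree g (Function.update ρ i (some false)))
      ((ch .one).toDTree g (Function.update ρ i (some true)))

theorem sep_toDTree_le (T : QTree (Fin m) Bool) (ρ : Fin m → Option Bool) (s : Sab4)
    (x y : Fin m → Bool) : sep (T.toDTree g ρ) x y ≤ T.queries (mixWith s x y) := by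
  induction T generalizing ρ with
  | leaf b => exact Nat.zero_le _
  | node i ch ih =>
    by_cases h : x i = y i
    · cases hxi : x i
      · simpa [toDTree, sep, queries, mixWith_of_eq h, hxi, ← h, Sab4.ofBool] using ih .zero _
      · simpa [toDTree, sep, queries, mixWith_of_eq h, hxi, ← h, Sab4.ofBool] using ih .one _
    · simp [toDTree, sep, queries, h]

theorem eval_toDTree_of_mem_preim_true (T : QTree (Fin m) Bool) {ρ : Fin m → Option Bool}
    {x : Fin m → Bool} (hx : x ∈ preim g true) (hρ : Agrees ρ x) :
    (T.toDTree g ρ).eval x = true := by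
  induction T generalizing ρ with
  | leaf b => simpa [toDTree, DTree.eval] using ⟨x, hx, hρ⟩
  | node i ch ih =>
    cases hxi : x i
    · simpa [toDTree, DTree.eval, hxi] using ih .zero (hρ.update hxi)
    · simpa [toDTree, DTree.eval, hxi] using ih .one (hρ.update hxi)

theorem exists_of_eval_toDTree (T : QTree (Fin m) Bool) {ρ : Fin m → Option Bool}
    {x : Fin m → Bool} (hρ : Agrees ρ x) (h : (T.toDTree g ρ).eval x = true) :
    ∃ y ∈ preim g true, Agrees ρ y ∧ ∀ s s', T.eval (mixWith s x y) = T.eval (mixWith s' x y) := by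
  induction T generalizing ρ with
  | leaf b =>
    obtain ⟨y, hy, hρy⟩ : ∃ y ∈ preim g true, Agrees ρ y := by
      simpa [toDTree, DTree.eval] using h
    exact ⟨y, hy, hρy, fun _ _ => rfl⟩
  | node i ch ih =>
    obtain ⟨y, hy, hρy, heq⟩ := ih (Sab4.ofBool (x i)) (hρ.update rfl) (by
      cases hxi : x i <;> simpa [toDTree, DTree.eval, hxi, Sab4.ofBool] using h)
    have hyi : x i = y i := (hρy i (x i) (by simp)).symm
    refine ⟨y, hy, hρ.of_update hρy, fun s s' => ?_⟩
    simpa [eval, mixWith, hyi] using heq s s'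

theorem computes_toDTree {T : QTree (Fin m) Bool} (hT : SabComputes T g) :
    Computes (T.toDTree g fun _ => none) g := by
  intro b x hx
  cases b
  · -- otherwise `T` could not tell the `*`-mix of `x` and some `y ∈ g⁻¹(1)` from their `†`-mix
    by_contra h
    obtain ⟨y, hy, -, heq⟩ := T.exists_of_eval_toDTree (agrees_none x) (by simpa using h)
    obtain ⟨i, hi⟩ := exists_ne_of_mem_preim hx hy
    have hstar := (hT _ (sabValid_mixWith (.inl rfl) hx hy)).1 ⟨i, mixWith_of_ne hi⟩
    have hdag := (hT _ (sabValid_mixWith (.inr rfl) hx hy)).2 ⟨i, mixWith_of_ne hi⟩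
    simp [heq .star .dag, hdag] at hstar
  · exact T.eval_toDTree_of_mem_preim_true hx (agrees_none x)

end QTree

end Sabotage

section Distributions

variable {γ : Type} [Fintype γ]

theorem IsDist.exists_le_sum_mul {w : γ → ℝ} (hw : IsDist w) (a : γ → ℝ) :
    ∃ i, a i ≤ ∑ j, w j * a j := by
  obtain ⟨i₀, -, -⟩ := Finset.exists_ne_zero_of_sum_ne_zero (hw.2 ▸ one_ne_zero : ∑ j, w j ≠ 0)
  obtain ⟨i, -, hi⟩ := Finset.exists_min_image univ a ⟨i₀, mem_univ _⟩
  refine ⟨i, ?_⟩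
  calc a i = ∑ j, w j * a i := by rw [← Finset.sum_mul, hw.2, one_mul]
    _ ≤ ∑ j, w j * a j :=
      sum_le_sum fun j _ => mul_le_mul_of_nonneg_left (hi j (mem_univ j)) (hw.1 j)

theorem IsDist.sum_mul_le {p : γ → ℝ} (hp : IsDist p) {A : Set γ} (hA : SuppIn p A) {a : γ → ℝ}
    {c : ℝ} (h : ∀ q ∈ A, a q ≤ c) : ∑ q, p q * a q ≤ c :=
  calc ∑ q, p q * a q ≤ ∑ q, p q * c := sum_le_sum fun q _ => by
        by_cases hq : p q = 0
        · simp [hq]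
        · exact mul_le_mul_of_nonneg_left (h q (hA q hq)) (hp.1 q)
    _ = c := by rw [← Finset.sum_mul, hp.2, one_mul]

theorem SuppIn.nonempty {p : γ → ℝ} {A : Set γ} (hA : SuppIn p A) (hp : IsDist p) : A.Nonempty :=
  let ⟨q, _, hq⟩ := Finset.exists_ne_zero_of_sum_ne_zero (hp.2 ▸ one_ne_zero : ∑ q, p q ≠ 0)
  ⟨q, hA q hq⟩

theorem sum_mul_natCast_mono {w : γ → ℝ} (hw : ∀ i, 0 ≤ w i) {a b : γ → ℕ} (h : ∀ i, a i ≤ b i) :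
    ∑ i, w i * (a i : ℝ) ≤ ∑ i, w i * (b i : ℝ) :=
  sum_le_sum fun i _ => mul_le_mul_of_nonneg_left (by exact_mod_cast h i) (hw i)

def distsOn (A : Set γ) : Set (γ → ℝ) :=
  {p | IsDist p ∧ SuppIn p A}

theorem distsOn_eq (A : Set γ) : distsOn A = stdSimplex ℝ γ ∩ ⋂ q ∈ Aᶜ, {p | p q = 0} := by
  ext p
  simp only [distsOn, IsDist, SuppIn, stdSimplex, Set.mem_inter_iff, Set.mem_iInter,
    Set.mem_compl_iff]
  exact and_congr_right fun _ => forall_congr' fun q => not_imp_comm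

theorem convex_distsOn (A : Set γ) : Convex ℝ (distsOn A) := by
  rw [distsOn_eq]
  refine (convex_stdSimplex ℝ γ).inter (convex_iInter₂ fun q _ => ?_)
  exact (LinearMap.proj (R := ℝ) (φ := fun _ : γ => ℝ) q).ker.convex

theorem isCompact_distsOn (A : Set γ) : IsCompact (distsOn A) := by
  rw [distsOn_eq]
  exact (isCompact_stdSimplex ℝ γ).inter_right
    (isClosed_biInter fun q _ => isClosed_eq (continuous_apply q) continuous_const)

theorem single_mem_distsOn [DecidableEq γ] {A : Set γ} {q : γ} (hq : q ∈ A) :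
    Pi.single q 1 ∈ distsOn A := by
  refine ⟨single_mem_stdSimplex ℝ q, fun q' hq' => ?_⟩
  by_cases h : q' = q
  · exact h ▸ hq
  · simp [h] at hq'

end Distributions

theorem exists_mem_stdSimplex_forall_le {ι F : Type*} [Fintype ι] [Nonempty ι]
    [NormedAddCommGroup F] [NormedSpace ℝ F] [FiniteDimensional ℝ F]
    (B : (ι → ℝ) →ₗ[ℝ] F →ₗ[ℝ] ℝ) {Y : Set F} (hYne : Y.Nonempty) (hYc : Convex ℝ Y)
    (hYk : IsCompact Y) {v : ℝ} (hv : ∀ p ∈ Y, ∃ μ ∈ stdSimplex ℝ ι, B μ p ≤ v) :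
    ∃ μ ∈ stdSimplex ℝ ι, ∀ p ∈ Y, B μ p ≤ v := by
  classical
  have hX := convex_stdSimplex ℝ ι
  obtain ⟨μ, hμ, p₀, hp₀, hsaddle⟩ := Sion.exists_isSaddlePointOn (f := fun μ p => B μ p)
    ⟨_, single_mem_stdSimplex ℝ (Classical.arbitrary ι)⟩ hX (isCompact_stdSimplex ℝ ι)
    (fun p _ => (B.flip p).continuous_of_finiteDimensional.lowerSemicontinuous
      |>.lowerSemicontinuousOn _)
    (fun p _ => ((B.flip p).convexOn hX).quasiconvexOn)
    hYc hYne hYk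
    (fun μ _ => (B μ).continuous_of_finiteDimensional.upperSemicontinuous
      |>.upperSemicontinuousOn _)
    (fun μ _ => ((B μ).concaveOn hYc).quasiconcaveOn)
  obtain ⟨ν, hν, hle⟩ := hv p₀ hp₀
  exact ⟨μ, hμ, fun p hp => (hsaddle ν hν p hp).trans hle⟩

section SeparationComplexity

variable {m : ℕ} (g : Set ((Fin m → Bool) × Bool))

def sepBounds : Set ℝ :=
  { c : ℝ | ∃ (k : ℕ) (wt : Fin k → ℝ) (T : Fin k → DTree (Fin m) Bool),
    IsDist wt ∧ (∀ i, Computes (T i) g) ∧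
    ∀ (b : Bool) (x y : Fin m → Bool), x ∈ preim g b → y ∈ preim g (!b) →
      ∑ i, wt i * (sep (T i) x y : ℝ) ≤ c }

def validPairs : Set ((Fin m → Bool) × (Fin m → Bool)) :=
  {q | q.1 ∈ preim g false ∧ q.2 ∈ preim g true}

def expSep (T : DTree (Fin m) Bool) (p : (Fin m → Bool) × (Fin m → Bool) → ℝ) : ℝ :=
  ∑ q, p q * (sep T q.1 q.2 : ℝ)

noncomputable def distSepValue (p : (Fin m → Bool) × (Fin m → Bool) → ℝ) : ℝ :=
  sInf {e : ℝ | ∃ T : DTree (Fin m) Bool, Computes T g ∧ e = expSep T p}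

def distSepValues : Set ℝ :=
  {c : ℝ | ∃ p, IsDist p ∧ SuppIn p (validPairs g) ∧ c = distSepValue g p}

theorem mem_sepBounds {ι : Type} [Fintype ι] {μ : ι → ℝ} {T : ι → DTree (Fin m) Bool} {c : ℝ}
    (hμ : IsDist μ) (hT : ∀ i, Computes (T i) g)
    (hc : ∀ x ∈ preim g false, ∀ y ∈ preim g true, ∑ i, μ i * (sep (T i) x y : ℝ) ≤ c) :
    c ∈ sepBounds g := by
  let e := Fintype.equivFin ι
  have hreindex (x y : Fin m → Bool) :
      ∑ k, μ (e.symm k) * (sep (T (e.symm k)) x y : ℝ) = ∑ i, μ i * (sep (T i) x y : ℝ) :=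
    e.symm.sum_comp fun i => μ i * (sep (T i) x y : ℝ)
  refine ⟨Fintype.card ι, μ ∘ e.symm, T ∘ e.symm, ⟨fun _ => hμ.1 _, ?_⟩, fun _ => hT _, ?_⟩
  · exact (e.symm.sum_comp μ).trans hμ.2
  · intro b x y hx hy
    cases b
    · exact (hreindex x y).trans_le (hc x hx y hy)
    · simp only [Function.comp_apply, sep_comm _ x y]
      exact (hreindex y x).trans_le (hc y hy x hx)

theorem RS_eq_sInf_sepBounds : RS g = sInf (sepBounds g) := by
  refine congrArg sInf (Set.ext fun c => ⟨?_, ?_⟩)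
  · rintro ⟨k, wt, T, hwt, hT, hc⟩
    refine mem_sepBounds g hwt (fun i => QTree.computes_toDTree (hT i)) fun x hx y hy => ?_
    exact (sum_mul_natCast_mono hwt.1 fun i => (T i).sep_toDTree_le _ .star x y).trans
      (hc _ (sabValid_mixWith (.inl rfl) hx hy))
  · rintro ⟨k, wt, T, hwt, hT, hc⟩
    refine ⟨k, wt, fun i => (T i).toQTree, hwt, fun i => DTree.sabComputes_toQTree (hT i), ?_⟩
    rintro w ⟨-, ⟨x, hx, hxw⟩, ⟨y, hy, hyw⟩⟩
    exact (sum_mul_natCast_mono hwt.1 fun i => (T i).queries_toQTree_le hxw hyw).trans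
      (hc false x y hx hy)

theorem exists_computes : ∃ T : DTree (Fin m) Bool, Computes T g := by
  classical
  obtain ⟨T, hT⟩ := DTree.exists_eval_eq (List.finRange m) (fun x => decide (x ∈ preim g true))
    fun x x' h => by rw [funext fun i => h i (List.mem_finRange i)]
  refine ⟨T, fun b x hx => ?_⟩
  cases b
  · simpa [hT] using fun hx' => hx.2 hx'.1
  · simpa [hT] using hx

theorem Computes.of_eval_eq {T T' : DTree (Fin m) Bool} (hT : Computes T g)
    (h : ∀ x, T'.eval x = T.eval x) : Computes T' g :=
  fun b x hx => (h x).trans (hT b x hx)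

theorem exists_depth_le_computes : ∃ T : DTree (Fin m) Bool, T.depth ≤ m ∧ Computes T g := by
  obtain ⟨T, hT⟩ := exists_computes g
  obtain ⟨T', hT'd, hT'eval, -⟩ := exists_depth_le_sep_le T
  exact ⟨T', hT'd, hT.of_eval_eq g hT'eval⟩

theorem distSepValue_le_expSep {p : (Fin m → Bool) × (Fin m → Bool) → ℝ} (hp : ∀ q, 0 ≤ p q)
    {T : DTree (Fin m) Bool} (hT : Computes T g) : distSepValue g p ≤ expSep T p :=
  csInf_le ⟨0, by
    rintro _ ⟨T', -, rfl⟩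
    exact sum_nonneg fun q _ => mul_nonneg (hp q) (Nat.cast_nonneg _)⟩ ⟨T, hT, rfl⟩

theorem exists_expSep_le_distSepValue {p : (Fin m → Bool) × (Fin m → Bool) → ℝ}
    (hp : ∀ q, 0 ≤ p q) :
    ∃ T : DTree (Fin m) Bool, T.depth ≤ m ∧ Computes T g ∧ expSep T p ≤ distSepValue g p := by
  have hfin : {T : DTree (Fin m) Bool | T.depth ≤ m ∧ Computes T g}.Finite :=
    (DTree.finite_setOf_depth_le m).subset fun _ h => h.1
  obtain ⟨T₀, hT₀⟩ := exists_depth_le_computes g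
  obtain ⟨T, hT, hmin⟩ := hfin.toFinset.exists_min_image (expSep · p)
    ⟨T₀, hfin.mem_toFinset.mpr hT₀⟩
  rw [Set.Finite.mem_toFinset] at hT
  refine ⟨T, hT.1, hT.2, le_csInf ⟨_, T₀, hT₀.2, rfl⟩ ?_⟩
  rintro _ ⟨T', hT', rfl⟩
  obtain ⟨T'', hT''d, hT''eval, hT''sep⟩ := exists_depth_le_sep_le T'
  exact (hmin T'' (hfin.mem_toFinset.mpr ⟨hT''d, hT'.of_eval_eq g hT''eval⟩)).trans
    (sum_mul_natCast_mono hp fun q => hT''sep q.1 q.2)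

theorem bddAbove_distSepValues : BddAbove (distSepValues g) := by
  refine ⟨m, ?_⟩
  rintro _ ⟨p, hp, -, rfl⟩
  obtain ⟨T, hTd, hTc, -⟩ := exists_expSep_le_distSepValue g hp.1
  refine (distSepValue_le_expSep g hp.1 hTc).trans
    (hp.sum_mul_le (A := Set.univ) (fun _ _ => trivial) fun q _ => ?_)
  exact_mod_cast (sep_le_depth T q.1 q.2).trans hTd

theorem distSepValue_le_of_mem_sepBounds {p : (Fin m → Bool) × (Fin m → Bool) → ℝ}
    (hp : p ∈ distsOn (validPairs g)) {c : ℝ} (hc : c ∈ sepBounds g) : distSepValue g p ≤ c := by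
  obtain ⟨k, wt, T, hwt, hT, hbound⟩ := hc
  obtain ⟨i, hi⟩ := hwt.exists_le_sum_mul fun i => expSep (T i) p
  calc distSepValue g p ≤ expSep (T i) p := distSepValue_le_expSep g hp.1.1 (hT i)
    _ ≤ ∑ i, wt i * expSep (T i) p := hi
    _ = ∑ q, p q * ∑ i, wt i * (sep (T i) q.1 q.2 : ℝ) := by
      simp only [expSep, Finset.mul_sum]
      rw [Finset.sum_comm]
      exact sum_congr rfl fun _ _ => sum_congr rfl fun _ _ => by ring
    _ ≤ c := hp.1.sum_mul_le hp.2 fun q hq => hbound false q.1 q.2 hq.1 hq.2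

theorem sSup_distSepValues_mem_sepBounds (hP : (validPairs g).Nonempty) :
    sSup (distSepValues g) ∈ sepBounds g := by
  classical
  let F := {T : DTree (Fin m) Bool | T.depth ≤ m ∧ Computes T g}
  have : Fintype F := ((DTree.finite_setOf_depth_le m).subset fun _ h => h.1).fintype
  obtain ⟨q₀, hq₀⟩ := hP
  have : Nonempty F := Set.Nonempty.to_subtype (exists_depth_le_computes g)
  let N : Matrix ((Fin m → Bool) × (Fin m → Bool)) F ℝ := fun q T => sep T.1 q.1 q.2
  let B := (dotProductBilin ℝ ℝ).compl₂ N.vecMulLinear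
  have hB (μ : F → ℝ) p : B μ p = ∑ T, μ T * expSep T.1 p := rfl
  have hv (p) (hp : p ∈ distsOn (validPairs g)) :
      ∃ ν ∈ stdSimplex ℝ F, B ν p ≤ sSup (distSepValues g) := by
    obtain ⟨T, hTd, hTc, hT⟩ := exists_expSep_le_distSepValue g hp.1.1
    refine ⟨Pi.single ⟨T, hTd, hTc⟩ 1, single_mem_stdSimplex ℝ _, ?_⟩
    calc B (Pi.single ⟨T, hTd, hTc⟩ 1) p = expSep T p := by simp [hB, Pi.single_apply]
      _ ≤ distSepValue g p := hT
      _ ≤ sSup (distSepValues g) := le_csSup (bddAbove_distSepValues g) ⟨p, hp.1, hp.2, rfl⟩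
  obtain ⟨μ, hμ, hle⟩ := exists_mem_stdSimplex_forall_le B ⟨_, single_mem_distsOn hq₀⟩
    (convex_distsOn _) (isCompact_distsOn _) hv
  refine mem_sepBounds g hμ (T := Subtype.val) (fun T => T.2.2) fun x hx y hy => ?_
  simpa [hB, expSep, Pi.single_apply] using hle _ (single_mem_distsOn (q := (x, y)) ⟨hx, hy⟩)

theorem sInf_sepBounds_eq_sSup_distSepValues : sInf (sepBounds g) = sSup (distSepValues g) := by
  by_cases hP : (validPairs g).Nonempty
  · have hmem := sSup_distSepValues_mem_sepBounds g hP
    refine le_antisymm (csInf_le ⟨0, ?_⟩ hmem) (csSup_le ?_ ?_)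
    · rintro c ⟨k, wt, T, hwt, -, hc⟩
      exact (sum_nonneg fun i _ => mul_nonneg (hwt.1 i) (Nat.cast_nonneg _)).trans
        (hc false _ _ hP.some_mem.1 hP.some_mem.2)
    · classical
      exact ⟨_, _, (single_mem_distsOn hP.some_mem).1, (single_mem_distsOn hP.some_mem).2, rfl⟩
    · rintro _ ⟨p, hp, hsupp, rfl⟩
      exact le_csInf ⟨_, hmem⟩ fun c hc => distSepValue_le_of_mem_sepBounds g ⟨hp, hsupp⟩ hc
  · have hempty : distSepValues g = ∅ :=
      Set.eq_empty_of_forall_notMem fun _ ⟨_, hp, hsupp, _⟩ => hP (hsupp.nonempty hp)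
    obtain ⟨T, hT⟩ := exists_computes g
    have huniv : sepBounds g = Set.univ :=
      Set.eq_univ_of_forall fun c => mem_sepBounds g (μ := fun _ : Unit => 1) (T := fun _ => T)
        ⟨fun _ => zero_le_one, by simp⟩ (fun _ => hT)
        fun x hx y hy => absurd ⟨(x, y), hx, hy⟩ hP
    rw [hempty, huniv, Real.sSup_empty, Real.sInf_univ]

end SeparationComplexity

/-- Alternative characterization of sabotage complexity:
`RS(g) = min_𝒯 max_{x,y : g(x)≠g(y)} E_{T∼𝒯}[sep_T(x,y)]`, where `𝒯` ranges over zero-error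
randomized algorithms for `g` (distributions over deterministic trees computing `g`), and this
in turn equals `max_p min_T E_{(x,y)∼p}[sep_T(x,y)]`, where `p` ranges over distributions on
pairs of valid inputs with `g(x) = 0`, `g(y) = 1` and `T` over deterministic trees computing
`g`. -/
theorem RS_alt_characterization (m : ℕ) (g : Set ((Fin m → Bool) × Bool)) :
    RS g =
      sInf { c : ℝ | ∃ (k : ℕ) (wt : Fin k → ℝ) (T : Fin k → DTree (Fin m) Bool),
        IsDist wt ∧ (∀ i, Computes (T i) g) ∧
        ∀ (b : Bool) (x y : Fin m → Bool), x ∈ preim g b → y ∈ preim g (!b) →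
          ∑ i, wt i * (sep (T i) x y : ℝ) ≤ c } ∧
    RS g =
      sSup { c : ℝ | ∃ p : ((Fin m → Bool) × (Fin m → Bool)) → ℝ,
        IsDist p ∧ SuppIn p {q | q.1 ∈ preim g false ∧ q.2 ∈ preim g true} ∧
        c = sInf { e : ℝ | ∃ T : DTree (Fin m) Bool, Computes T g ∧
          e = ∑ q : (Fin m → Bool) × (Fin m → Bool), p q * (sep T q.1 q.2 : ℝ) } } :=
  ⟨RS_eq_sInf_sepBounds g,
    (RS_eq_sInf_sepBounds g).trans (sInf_sepBounds_eq_sSup_distSepValues g)⟩
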